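/- arXiv:2411.02940 — 2 statements merged into one kernel-verified Lean document; each statement's English description precedes it below -/
import Mathlib

section
/- Let n ≥ 1 be an integer, let 1 < p < ∞, and let p' be the dual exponent defined by 1/p + 1/p' = 1. Let u₀ ∈ L¹(ℝⁿ) and set M = ∫_{ℝⁿ} u₀(x) dx. Then t^{n/(2p')} · ‖u₀ * G_t − M·G_t‖_{L^p(ℝⁿ)} → 0 as t → ∞. -/
/-!
Write `F_t = u₀ * G_t - M G_t = ∫ u₀(y) (G_t(· - y) - G_t) dy`. Since `s ↦ exp (-s²)` is
1-Lipschitz and bounded by 1, `|G_t(x - y) - G_t(x)| ≤ (4πt)^{-n/2} min(1, ‖y‖/(2√t))`,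
so `‖F_t‖_∞ ≤ (4πt)^{-n/2} ∫ |u₀(y)| min(1, ‖y‖/(2√t)) dy`, and this last integral
tends to 0 by dominated convergence. On the other hand `‖F_t‖₁ ≤ 2‖u₀‖₁`. The
interpolation inequality `‖f‖_p ≤ ‖f‖_∞^{1/p'} ‖f‖₁^{1/p}` then gives
`t^{n/(2p')} ‖F_t‖_p → 0`.
-/

open MeasureTheory Filter Real
open scoped ENNReal Convolution Topology

noncomputable def heatKernel (n : ℕ) (t : ℝ) (x : EuclideanSpace ℝ (Fin n)) : ℝ :=
  (4 * Real.pi * t) ^ (-(n : ℝ) / 2) * Real.exp (-‖x‖ ^ 2 / (4 * t))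

lemma two_mul_abs_le_exp_sq (x : ℝ) : 2 * |x| ≤ exp (x ^ 2) := by
  nlinarith [add_one_le_exp (x ^ 2), sq_abs x, sq_nonneg (|x| - 1)]

lemma lipschitzWith_exp_neg_sq : LipschitzWith 1 (fun s : ℝ => exp (-s ^ 2)) := by
  refine lipschitzWith_of_nnnorm_deriv_le (by fun_prop) fun x => ?_
  have hderiv : HasDerivAt (fun s : ℝ => exp (-s ^ 2)) (exp (-x ^ 2) * -(2 * x)) x := by
    simpa using ((hasDerivAt_pow 2 x).fun_neg).exp
  have hinv : exp (-x ^ 2) * exp (x ^ 2) = 1 := by rw [← exp_add]; simp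
  rw [hderiv.deriv, ← NNReal.coe_le_coe, coe_nnnorm, Real.norm_eq_abs, abs_mul, abs_neg,
    abs_of_pos (exp_pos _), abs_mul, abs_two, NNReal.coe_one]
  nlinarith [two_mul_abs_le_exp_sq x, exp_pos (-x ^ 2)]

lemma abs_exp_neg_sq_sub_exp_neg_sq_le (a b : ℝ) :
    |exp (-a ^ 2) - exp (-b ^ 2)| ≤ min 1 |a - b| := by
  refine le_min ?_ (by simpa [Real.dist_eq] using lipschitzWith_exp_neg_sq.dist_le_mul a b)
  have ha : exp (-a ^ 2) ≤ 1 := exp_le_one_iff.mpr (by nlinarith [sq_nonneg a])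
  have hb : exp (-b ^ 2) ≤ 1 := exp_le_one_iff.mpr (by nlinarith [sq_nonneg b])
  rw [abs_sub_le_iff]
  constructor <;> linarith [exp_pos (-a ^ 2), exp_pos (-b ^ 2)]

lemma eLpNorm_le_eLpNorm_top_rpow_mul_eLpNorm_one_rpow {α E : Type*} [MeasurableSpace α]
    {μ : Measure α} [NormedAddCommGroup E] {f : α → E} {p : ℝ} (hp : 1 ≤ p)
    (hf : eLpNorm f ∞ μ ≠ ∞) :
    eLpNorm f (ENNReal.ofReal p) μ
      ≤ eLpNorm f ∞ μ ^ (1 - 1 / p) * eLpNorm f 1 μ ^ (1 / p) := by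
  have hp₀ : 0 < p := by linarith
  set C := eLpNorm f ∞ μ with hC
  have hpow : ∀ᵐ x ∂μ, ‖f x‖ₑ ^ p ≤ C ^ (p - 1) * ‖f x‖ₑ := by
    filter_upwards [ae_le_eLpNormEssSup (f := f) (μ := μ)] with x hx
    calc ‖f x‖ₑ ^ p = ‖f x‖ₑ ^ (p - 1) * ‖f x‖ₑ := by
          simpa using
            ENNReal.rpow_add_of_nonneg (x := ‖f x‖ₑ) (p - 1) 1 (by linarith) zero_le_one
      _ ≤ C ^ (p - 1) * ‖f x‖ₑ := by
          gcongr
          rwa [hC, eLpNorm_exponent_top]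
  have hlintegral : ∫⁻ x, ‖f x‖ₑ ^ p ∂μ ≤ C ^ (p - 1) * eLpNorm f 1 μ := by
    rw [eLpNorm_one_eq_lintegral_enorm,
      ← lintegral_const_mul' _ _ (ENNReal.rpow_ne_top_of_nonneg (by linarith) hf)]
    exact lintegral_mono_ae hpow
  rw [eLpNorm_eq_lintegral_rpow_enorm_toReal (by simpa using hp₀) ENNReal.ofReal_ne_top,
    ENNReal.toReal_ofReal hp₀.le]
  calc (∫⁻ x, ‖f x‖ₑ ^ p ∂μ) ^ (1 / p) ≤ (C ^ (p - 1) * eLpNorm f 1 μ) ^ (1 / p) := by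
        gcongr
    _ = C ^ (1 - 1 / p) * eLpNorm f 1 μ ^ (1 / p) := by
        rw [ENNReal.mul_rpow_of_nonneg _ _ (by positivity), ← ENNReal.rpow_mul]
        congr 2
        field_simp

lemma eLpNorm_one_integral_mul_sub_sub_integral_mul_le {G : Type*} [AddGroup G]
    [MeasurableSpace G] [MeasurableAdd₂ G] [MeasurableNeg G] {μ : Measure G} [SFinite μ]
    [μ.IsAddRightInvariant] {u K : G → ℝ} (hu : Integrable u μ) (hK : Integrable K μ)
    (hK₀ : 0 ≤ K) :
    eLpNorm (fun x => (∫ y, u y * K (x - y) ∂μ) - (∫ y, u y ∂μ) * K x) 1 μ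
      ≤ ENNReal.ofReal (2 * (∫ y, |u y| ∂μ) * ∫ x, K x ∂μ) := by
  set I := ∫ y, |u y| ∂μ
  set J := fun x => ∫ y, |u y| * K (x - y) ∂μ
  have hJ_conv : J = (fun y => |u y|) ⋆[ContinuousLinearMap.lsmul ℝ ℝ, μ] K := by
    ext x
    simp [J, convolution_def]
  have hJ : Integrable J μ := hJ_conv ▸ hu.abs.integrable_convolution _ hK
  have hJI : ∫ x, J x ∂μ = I * ∫ x, K x ∂μ := hJ_conv ▸ integral_convolution _ hu.abs hK
  have hI₀ : 0 ≤ I := integral_nonneg fun y => abs_nonneg (u y)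
  have hJ₀ : 0 ≤ J := fun x => integral_nonneg fun y => mul_nonneg (abs_nonneg _) (hK₀ _)
  have hpt : ∀ x, ‖(∫ y, u y * K (x - y) ∂μ) - (∫ y, u y ∂μ) * K x‖ₑ
      ≤ ENNReal.ofReal (J x) + ENNReal.ofReal (I * K x) := by
    intro x
    rw [Real.enorm_eq_ofReal_abs, ← ENNReal.ofReal_add (hJ₀ x) (mul_nonneg hI₀ (hK₀ x))]
    refine ENNReal.ofReal_le_ofReal ((abs_sub _ _).trans (add_le_add ?_ ?_))
    · refine abs_integral_le_integral_abs.trans_eq (integral_congr_ae (.of_forall fun y => ?_))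
      simp [abs_mul, abs_of_nonneg (hK₀ _)]
    · rw [abs_mul, abs_of_nonneg (hK₀ x)]
      exact mul_le_mul_of_nonneg_right abs_integral_le_integral_abs (hK₀ x)
  rw [eLpNorm_one_eq_lintegral_enorm]
  calc ∫⁻ x, ‖(∫ y, u y * K (x - y) ∂μ) - (∫ y, u y ∂μ) * K x‖ₑ ∂μ
      ≤ ∫⁻ x, ENNReal.ofReal (J x) + ENNReal.ofReal (I * K x) ∂μ := lintegral_mono hpt
    _ = ENNReal.ofReal (∫ x, J x ∂μ) + ENNReal.ofReal (∫ x, I * K x ∂μ) := by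
        rw [lintegral_add_right' _ (hK.const_mul I).aemeasurable.ennreal_ofReal,
          ofReal_integral_eq_lintegral_ofReal hJ (.of_forall hJ₀),
          ofReal_integral_eq_lintegral_ofReal (hK.const_mul I)
            (.of_forall fun x => mul_nonneg hI₀ (hK₀ x))]
    _ = ENNReal.ofReal (2 * I * ∫ x, K x ∂μ) := by
        have hIK : 0 ≤ I * ∫ x, K x ∂μ := mul_nonneg hI₀ (integral_nonneg hK₀)
        rw [hJI, integral_const_mul, ← ENNReal.ofReal_add hIK hIK]
        ring_nf

noncomputable def truncatedMoment {E : Type*} [Norm E] [MeasurableSpace E] (μ : Measure E)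
    (u : E → ℝ) (s : ℝ) : ℝ :=
  ∫ y, |u y| * min 1 (s * ‖y‖) ∂μ

section truncatedMoment

variable {E : Type*} [NormedAddCommGroup E] {s : ℝ}

lemma min_one_mul_norm_nonneg (hs : 0 ≤ s) (y : E) : 0 ≤ min 1 (s * ‖y‖) :=
  le_min zero_le_one (by positivity)

variable [MeasurableSpace E] {μ : Measure E} {u : E → ℝ}

lemma truncatedMoment_nonneg (hs : 0 ≤ s) : 0 ≤ truncatedMoment μ u s :=
  integral_nonneg fun y => mul_nonneg (abs_nonneg _) (min_one_mul_norm_nonneg hs y)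

variable [OpensMeasurableSpace E]

lemma integrable_abs_mul_min_one_mul_norm (hu : Integrable u μ) (hs : 0 ≤ s) :
    Integrable (fun y => |u y| * min 1 (s * ‖y‖)) μ := by
  refine hu.abs.mul_bdd (c := 1) (by fun_prop : Continuous _).aestronglyMeasurable
    (.of_forall fun y => ?_)
  rw [Real.norm_eq_abs, abs_of_nonneg (min_one_mul_norm_nonneg hs y)]
  exact min_le_left _ _

lemma tendsto_truncatedMoment (hu : Integrable u μ) :
    Tendsto (truncatedMoment μ u) (𝓝[>] 0) (𝓝 0) := by
  have hlim : ∀ y, Tendsto (fun s => |u y| * min 1 (s * ‖y‖)) (𝓝[>] 0) (𝓝 0) := by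
    intro y
    have hcont : Continuous fun s : ℝ => |u y| * min 1 (s * ‖y‖) := by fun_prop
    simpa using (hcont.tendsto 0).mono_left nhdsWithin_le_nhds
  have hbound : ∀ᶠ s in 𝓝[>] (0 : ℝ), ∀ᵐ y ∂μ, ‖|u y| * min 1 (s * ‖y‖)‖ ≤ |u y| := by
    filter_upwards [self_mem_nhdsWithin] with s (hs : 0 < s)
    refine .of_forall fun y => ?_
    rw [norm_mul, norm_abs_eq_norm, Real.norm_eq_abs, Real.norm_eq_abs,
      abs_of_nonneg (min_one_mul_norm_nonneg hs.le y)]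
    exact mul_le_of_le_one_right (abs_nonneg (u y)) (min_le_left _ _)
  unfold truncatedMoment
  simpa using tendsto_integral_filter_of_dominated_convergence (fun y => |u y|)
    (.of_forall fun s => hu.abs.aestronglyMeasurable.mul
      (by fun_prop : Continuous fun y : E => min 1 (s * ‖y‖)).aestronglyMeasurable)
    hbound hu.abs (.of_forall hlim)

end truncatedMoment

namespace heatKernel

variable {n : ℕ} {t : ℝ}

lemma eq_mul_exp_neg_sq (ht : 0 < t) (x : EuclideanSpace ℝ (Fin n)) :
    heatKernel n t x = (4 * π * t) ^ (-(n : ℝ) / 2) * exp (-((2 * √t)⁻¹ * ‖x‖) ^ 2) := by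
  rw [heatKernel, mul_pow, inv_pow, mul_pow, sq_sqrt ht.le]
  ring_nf

lemma eq_mul_exp_neg_mul_sq (t : ℝ) (x : EuclideanSpace ℝ (Fin n)) :
    heatKernel n t x = (4 * π * t) ^ (-(n : ℝ) / 2) * exp (-(4 * t)⁻¹ * ‖x‖ ^ 2) := by
  rw [heatKernel]
  ring_nf

lemma nonneg (ht : 0 ≤ t) (x : EuclideanSpace ℝ (Fin n)) : 0 ≤ heatKernel n t x := by
  unfold heatKernel
  positivity

lemma le_rpow (ht : 0 < t) (x : EuclideanSpace ℝ (Fin n)) :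
    heatKernel n t x ≤ (4 * π * t) ^ (-(n : ℝ) / 2) := by
  rw [eq_mul_exp_neg_sq ht]
  refine mul_le_of_le_one_right (by positivity) (exp_le_one_iff.mpr ?_)
  nlinarith [sq_nonneg ((2 * √t)⁻¹ * ‖x‖)]

@[fun_prop]
lemma continuous (n : ℕ) (t : ℝ) : Continuous (heatKernel n t) := by
  unfold heatKernel
  fun_prop

lemma integral_eq_one (ht : 0 < t) : ∫ x, heatKernel n t x = 1 := by
  simp_rw [eq_mul_exp_neg_mul_sq t, integral_const_mul,
    GaussianFourier.integral_rexp_neg_mul_sq_norm (inv_pos.mpr (by positivity : 0 < 4 * t)),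
    finrank_euclideanSpace_fin, div_inv_eq_mul]
  rw [← mul_assoc, mul_comm π 4, ← rpow_add (by positivity), neg_div, neg_add_cancel,
    rpow_zero]

lemma integrable (ht : 0 < t) : Integrable (heatKernel n t) :=
  .of_integral_ne_zero (by simp [integral_eq_one ht])

lemma abs_sub_sub_le (ht : 0 < t) (x y : EuclideanSpace ℝ (Fin n)) :
    |heatKernel n t (x - y) - heatKernel n t x|
      ≤ (4 * π * t) ^ (-(n : ℝ) / 2) * min 1 ((2 * √t)⁻¹ * ‖y‖) := by
  rw [eq_mul_exp_neg_sq ht, eq_mul_exp_neg_sq ht, ← mul_sub, abs_mul,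
    abs_of_pos (by positivity)]
  gcongr
  refine (abs_exp_neg_sq_sub_exp_neg_sq_le _ _).trans (min_le_min_left _ ?_)
  rw [← mul_sub, abs_mul, abs_of_pos (by positivity)]
  gcongr
  simpa using abs_norm_sub_norm_le (x - y) x

variable {u : EuclideanSpace ℝ (Fin n) → ℝ}

lemma abs_integral_mul_sub_sub_le_truncatedMoment (hu : Integrable u) (ht : 0 < t)
    (x : EuclideanSpace ℝ (Fin n)) :
    |(∫ y, u y * heatKernel n t (x - y)) - (∫ y, u y) * heatKernel n t x|
      ≤ (4 * π * t) ^ (-(n : ℝ) / 2) * truncatedMoment volume u (2 * √t)⁻¹ := by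
  have htranslate : Integrable (fun y => u y * heatKernel n t (x - y)) := by
    refine hu.mul_bdd (c := (4 * π * t) ^ (-(n : ℝ) / 2))
      (by fun_prop : Continuous _).aestronglyMeasurable (.of_forall fun y => ?_)
    rw [Real.norm_eq_abs, abs_of_nonneg (nonneg ht.le _)]
    exact le_rpow ht _
  rw [truncatedMoment, ← integral_mul_const, ← integral_sub htranslate (hu.mul_const _),
    ← integral_const_mul, ← Real.norm_eq_abs]
  refine norm_integral_le_of_norm_le
    ((integrable_abs_mul_min_one_mul_norm hu (by positivity)).const_mul _)
    (.of_forall fun y => ?_)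
  rw [← mul_sub, Real.norm_eq_abs, abs_mul, mul_left_comm]
  exact mul_le_mul_of_nonneg_left (abs_sub_sub_le ht x y) (abs_nonneg _)

lemma ofReal_rpow_mul_eLpNorm_sub_le (hu : Integrable u) {p : ℝ} (hp : 1 ≤ p) (ht : 0 < t) :
    ENNReal.ofReal (t ^ ((n : ℝ) / 2 * (1 - 1 / p))) *
        eLpNorm (fun x => (∫ y, u y * heatKernel n t (x - y)) - (∫ y, u y) * heatKernel n t x)
          (ENNReal.ofReal p)
      ≤ ENNReal.ofReal ((4 * π) ^ (-(n : ℝ) / 2) * truncatedMoment volume u (2 * √t)⁻¹)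
            ^ (1 - 1 / p) * ENNReal.ofReal (2 * ∫ y, |u y|) ^ (1 / p) := by
  set F := fun x => (∫ y, u y * heatKernel n t (x - y)) - (∫ y, u y) * heatKernel n t x
  set D := truncatedMoment volume u (2 * √t)⁻¹
  have hD : 0 ≤ D := truncatedMoment_nonneg (by positivity)
  have hθ : 0 ≤ 1 - 1 / p := sub_nonneg.mpr (div_le_one_of_le₀ hp (by linarith))
  have hsup : eLpNorm F ∞ ≤ ENNReal.ofReal ((4 * π * t) ^ (-(n : ℝ) / 2) * D) := by
    rw [eLpNorm_exponent_top]
    exact eLpNormEssSup_le_of_ae_bound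
      (.of_forall (abs_integral_mul_sub_sub_le_truncatedMoment hu ht))
  have hone :=
    eLpNorm_one_integral_mul_sub_sub_integral_mul_le hu (integrable ht) (nonneg ht.le)
  rw [integral_eq_one ht, mul_one] at hone
  have hscale : t ^ ((n : ℝ) / 2) * ((4 * π * t) ^ (-(n : ℝ) / 2) * D)
      = (4 * π) ^ (-(n : ℝ) / 2) * D := by
    rw [mul_rpow (by positivity) ht.le, neg_div, rpow_neg ht.le]
    field_simp
  calc _ ≤ ENNReal.ofReal (t ^ ((n : ℝ) / 2)) ^ (1 - 1 / p) *
          (ENNReal.ofReal ((4 * π * t) ^ (-(n : ℝ) / 2) * D) ^ (1 - 1 / p) *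
            ENNReal.ofReal (2 * ∫ y, |u y|) ^ (1 / p)) := by
        rw [ENNReal.ofReal_rpow_of_nonneg (by positivity) hθ, ← rpow_mul ht.le]
        gcongr
        refine (eLpNorm_le_eLpNorm_top_rpow_mul_eLpNorm_one_rpow hp
          (ne_top_of_le_ne_top ENNReal.ofReal_ne_top hsup)).trans ?_
        gcongr
    _ = _ := by
        rw [← mul_assoc, ← ENNReal.mul_rpow_of_nonneg _ _ hθ,
          ← ENNReal.ofReal_mul (by positivity), hscale]

end heatKernel

theorem heat_asymptotics_Lp_general (n : ℕ)
    (p p' : ℝ) (hp : 1 < p) (hp' : 1 / p + 1 / p' = 1)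
    (u₀ : EuclideanSpace ℝ (Fin n) → ℝ) (hu₀ : Integrable u₀) :
    Tendsto
      (fun t : ℝ =>
        ENNReal.ofReal (t ^ ((n : ℝ) / (2 * p'))) *
          eLpNorm
            (fun x : EuclideanSpace ℝ (Fin n) =>
              (∫ y, u₀ y * heatKernel n t (x - y)) - (∫ x, u₀ x) * heatKernel n t x)
            (ENNReal.ofReal p) volume)
      atTop (nhds 0) := by
  have hexp : (n : ℝ) / (2 * p') = n / 2 * (1 - 1 / p) := by
    rw [show 1 - 1 / p = 1 / p' by linarith]
    ring
  have hθ : 0 < 1 - 1 / p := sub_pos.mpr ((div_lt_one (by linarith)).mpr hp)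
  have hmoment : Tendsto (fun t => truncatedMoment volume u₀ (2 * √t)⁻¹) atTop (𝓝 0) :=
    (tendsto_truncatedMoment hu₀).comp
      (tendsto_inv_atTop_nhdsGT_zero.comp (tendsto_sqrt_atTop.const_mul_atTop two_pos))
  have hmajorant : Tendsto (fun t =>
      ENNReal.ofReal ((4 * π) ^ (-(n : ℝ) / 2) * truncatedMoment volume u₀ (2 * √t)⁻¹)
        ^ (1 - 1 / p) * ENNReal.ofReal (2 * ∫ y, |u₀ y|) ^ (1 / p)) atTop (𝓝 0) := by
    have h := ENNReal.Tendsto.mul_const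
      (((ENNReal.continuous_rpow_const (y := 1 - 1 / p)).tendsto _).comp
        (ENNReal.tendsto_ofReal (hmoment.const_mul ((4 * π) ^ (-(n : ℝ) / 2)))))
      (.inr (ENNReal.rpow_ne_top_of_nonneg (by positivity) ENNReal.ofReal_ne_top :
        ENNReal.ofReal (2 * ∫ y, |u₀ y|) ^ (1 / p) ≠ ∞))
    rwa [mul_zero, ENNReal.ofReal_zero, ENNReal.zero_rpow_of_pos hθ, zero_mul] at h
  refine tendsto_of_tendsto_of_tendsto_of_le_of_le' tendsto_const_nhds hmajorant
    (.of_forall fun _ => zero_le) ?_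
  filter_upwards [eventually_gt_atTop 0] with t ht
  rw [hexp]
  exact heatKernel.ofReal_rpow_mul_eLpNorm_sub_le hu₀ hp.le ht

/-- For `1 < p < ∞` with dual exponent `p'` and `u₀ ∈ L¹(ℝⁿ)` with mass `M = ∫ u₀`,
one has `t^{n/(2p')} · ‖u₀ * G_t − M · G_t‖_{L^p} → 0` as `t → ∞`. -/
theorem heat_asymptotics_Lp (n : ℕ) (hn : 1 ≤ n)
    (p p' : ℝ) (hp : 1 < p) (hp' : 1 / p + 1 / p' = 1)
    (u₀ : EuclideanSpace ℝ (Fin n) → ℝ) (hu₀ : Integrable u₀) :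
    Tendsto
      (fun t : ℝ =>
        ENNReal.ofReal (t ^ ((n : ℝ) / (2 * p'))) *
          eLpNorm
            (fun x : EuclideanSpace ℝ (Fin n) =>
              (∫ y, u₀ y * heatKernel n t (x - y)) - (∫ x, u₀ x) * heatKernel n t x)
            (ENNReal.ofReal p) volume)
      atTop (nhds 0) :=
  heat_asymptotics_Lp_general n p p' hp hp' u₀ hu₀
end

section
/- Let ρ ∈ E be nonzero, let α ∈ E satisfy ⟨α, ρ⟩ > 0, and let K > 0. Then there exist C > 0 and θ₀ ∈ (0,1) such that for every θ ∈ (0, θ₀] and all vectors a, b ∈ E satisfying ‖a‖ ≥ θ^{−2}, ‖a − b‖ ≤ K, and ∠(a, ρ) ≤ θ, one has ⟨α, a⟩ > 0 and |⟨α, b⟩/⟨α, a⟩ − 1| ≤ C·θ. -/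
/-!
Write `c = ⟪α, ρ⟫ / ‖ρ‖ > 0` and let `u` be the vector of length `‖a‖` pointing along `ρ`.
By the law of cosines and `1 - cos φ ≤ φ² / 2`, the chord satisfies `‖a - u‖ ≤ ‖a‖ ∠(a, ρ)`,
so `⟪α, a⟫ ≥ ‖a‖ (c - ‖α‖ θ) ≥ ‖a‖ c / 2 ≥ c / (2θ²)` once `θ ≤ c / (2‖α‖)`. Since
`|⟪α, b⟫ - ⟪α, a⟫| ≤ ‖α‖ K`, the ratio differs from `1` by at most `(2‖α‖K / c) θ²`.
-/

open RealInnerProductSpace InnerProductGeometry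

section InnerProductSpace

variable {E : Type*} [NormedAddCommGroup E] [InnerProductSpace ℝ E]

lemma norm_sub_le_norm_mul_angle_of_norm_eq {x y : E} (h : ‖x‖ = ‖y‖) :
    ‖x - y‖ ≤ ‖x‖ * angle x y := by
  have hcos : 1 - angle x y ^ 2 / 2 ≤ Real.cos (angle x y) := Real.one_sub_sq_div_two_le_cos
  have hsq : ‖x - y‖ ^ 2 ≤ (‖x‖ * angle x y) ^ 2 := by
    rw [sq, norm_sub_sq_eq_norm_sq_add_norm_sq_sub_two_mul_norm_mul_norm_mul_cos_angle, ← h]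
    nlinarith [mul_le_mul_of_nonneg_left hcos (sq_nonneg ‖x‖)]
  exact (pow_le_pow_iff_left₀ (norm_nonneg _)
    (mul_nonneg (norm_nonneg _) (angle_nonneg _ _)) two_ne_zero).1 hsq

lemma norm_mul_sub_le_inner (α a : E) {ρ : E} (hρ : ρ ≠ 0) :
    ‖a‖ * (⟪α, ρ⟫ / ‖ρ‖ - ‖α‖ * angle a ρ) ≤ ⟪α, a⟫ := by
  rcases eq_or_ne a 0 with rfl | ha
  · simp
  have hρn : 0 < ‖ρ‖ := norm_pos_iff.2 hρ
  set u : E := (‖a‖ / ‖ρ‖) • ρ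
  have hu : ‖u‖ = ‖a‖ := by
    rw [norm_smul, Real.norm_of_nonneg (by positivity), div_mul_cancel₀ _ hρn.ne']
  have hangle : angle a u = angle a ρ := angle_smul_right_of_pos _ _ (by positivity)
  have hchord : ‖a - u‖ ≤ ‖a‖ * angle a ρ :=
    hangle ▸ norm_sub_le_norm_mul_angle_of_norm_eq hu.symm
  have hsplit : ⟪α, a⟫ = ‖a‖ * (⟪α, ρ⟫ / ‖ρ‖) + ⟪α, a - u⟫ := by
    rw [inner_sub_right, real_inner_smul_right]
    ring
  have herr : -(‖α‖ * ‖a - u‖) ≤ ⟪α, a - u⟫ :=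
    neg_le_of_abs_le (abs_real_inner_le_norm _ _)
  nlinarith [mul_le_mul_of_nonneg_left hchord (norm_nonneg α)]

end InnerProductSpace

lemma abs_div_sub_one_le_of_le {x y d m : ℝ} (hm : 0 < m) (hmx : m ≤ x) (hd : |y - x| ≤ d) :
    |y / x - 1| ≤ d / m := by
  have hx : 0 < x := hm.trans_le hmx
  rw [div_sub_one hx.ne', abs_div, abs_of_pos hx]
  exact div_le_div₀ ((abs_nonneg _).trans hd) hd hm hmx

theorem inner_ratio_close_to_one_general {E : Type*} [NormedAddCommGroup E]
    [InnerProductSpace ℝ E]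
    (ρ : E) (hρ : ρ ≠ 0) (α : E) (hα : 0 < ⟪α, ρ⟫) (K : ℝ) (hK : 0 < K) :
    ∃ C > (0 : ℝ), ∃ θ₀ ∈ Set.Ioo (0 : ℝ) 1, ∀ θ ∈ Set.Ioc (0 : ℝ) θ₀, ∀ a b : E,
      θ ^ (-2 : ℤ) ≤ ‖a‖ → ‖a - b‖ ≤ K → InnerProductGeometry.angle a ρ ≤ θ →
      0 < ⟪α, a⟫ ∧ |⟪α, b⟫ / ⟪α, a⟫ - 1| ≤ C * θ := by
  set c := ⟪α, ρ⟫ / ‖ρ‖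
  have hc : 0 < c := div_pos hα (norm_pos_iff.2 hρ)
  have hαn : 0 < ‖α‖ := norm_pos_iff.2 (by rintro rfl; simp at hα)
  refine ⟨2 * ‖α‖ * K / c, by positivity, min (1 / 2) (c / (2 * ‖α‖)),
    ⟨by positivity, (min_le_left _ _).trans_lt (by norm_num)⟩, ?_⟩
  rintro θ ⟨hθ, hθ₀⟩ a b ha hab hangle
  have hθ1 : θ ≤ 1 := hθ₀.trans ((min_le_left _ _).trans (by norm_num))
  have hθc : ‖α‖ * θ ≤ c / 2 := by
    have := hθ₀.trans (min_le_right _ _)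
    rw [le_div_iff₀ (by positivity)] at this
    linarith
  have ha' : (θ ^ 2)⁻¹ ≤ ‖a‖ := by simpa [zpow_neg] using ha
  have hlower : c / 2 * (θ ^ 2)⁻¹ ≤ ⟪α, a⟫ := calc
    c / 2 * (θ ^ 2)⁻¹ ≤ ‖a‖ * (c - ‖α‖ * θ) := by nlinarith [inv_pos.2 (pow_pos hθ 2)]
    _ ≤ ‖a‖ * (c - ‖α‖ * angle a ρ) := by gcongr
    _ ≤ ⟪α, a⟫ := norm_mul_sub_le_inner α a hρ
  have hdiff : |⟪α, b⟫ - ⟪α, a⟫| ≤ ‖α‖ * K := by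
    rw [← inner_sub_right]
    exact (abs_real_inner_le_norm _ _).trans (by rw [norm_sub_rev]; gcongr)
  refine ⟨(by positivity : 0 < c / 2 * (θ ^ 2)⁻¹).trans_le hlower, ?_⟩
  calc |⟪α, b⟫ / ⟪α, a⟫ - 1|
      ≤ ‖α‖ * K / (c / 2 * (θ ^ 2)⁻¹) := abs_div_sub_one_le_of_le (by positivity) hlower hdiff
    _ = 2 * ‖α‖ * K / c * θ * θ := by field_simp
    _ ≤ 2 * ‖α‖ * K / c * θ := mul_le_of_le_one_right (by positivity) hθ1

/-- If `ρ ≠ 0`, `⟨α,ρ⟩ > 0` and `K > 0`, then there are `C > 0` and `θ₀ ∈ (0,1)` such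
that for all `θ ∈ (0, θ₀]` and all `a, b` with `‖a‖ ≥ θ⁻²`, `‖a - b‖ ≤ K` and
`∠(a,ρ) ≤ θ`, one has `⟨α,a⟩ > 0` and `|⟨α,b⟩/⟨α,a⟩ − 1| ≤ Cθ`. -/
theorem inner_ratio_close_to_one {E : Type*} [NormedAddCommGroup E]
    [InnerProductSpace ℝ E] [FiniteDimensional ℝ E]
    (ρ : E) (hρ : ρ ≠ 0) (α : E) (hα : 0 < ⟪α, ρ⟫) (K : ℝ) (hK : 0 < K) :
    ∃ C > (0 : ℝ), ∃ θ₀ ∈ Set.Ioo (0 : ℝ) 1, ∀ θ ∈ Set.Ioc (0 : ℝ) θ₀, ∀ a b : E,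
      θ ^ (-2 : ℤ) ≤ ‖a‖ → ‖a - b‖ ≤ K → InnerProductGeometry.angle a ρ ≤ θ →
      0 < ⟪α, a⟫ ∧ |⟪α, b⟫ / ⟪α, a⟫ - 1| ≤ C * θ :=
  inner_ratio_close_to_one_general ρ hρ α hα K hK
end
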